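/- arXiv:2403.09661 — 4 statements merged into one kernel-verified Lean document; each statement's English description precedes it below -/
import Mathlib

section
/- If α, β, γ, δ are angles with α + γ = β + δ, 0 < α + γ < π, all four angles strictly between 0 and π, and sin α / sin γ = sin β / sin δ, then α = β and γ = δ. -/
/-!
Put `s = α + γ = β + δ`. Then `sin α sin δ - sin β sin γ = sin s · sin (α - β)`, so the cross-multiplied
ratio condition gives `sin s · sin (α - β) = 0`. As `0 < s < π` the first factor is nonzero, and
`|α - β| < π` forces `α = β`.
-/

open Real Set

theorem sin_mul_sin_sub_sub_sin_mul_sin_sub (s a b : ℝ) :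
    sin a * sin (s - b) - sin b * sin (s - a) = sin s * sin (a - b) := by
  simp only [sin_sub]
  ring

theorem eq_of_sin_sub_eq_zero {a b : ℝ} (ha : a ∈ Ioo 0 π) (hb : b ∈ Ioo 0 π)
    (h : sin (a - b) = 0) : a = b :=
  sub_eq_zero.mp <| (sin_eq_zero_iff_of_lt_of_lt (by linarith [ha.1, hb.2])
    (by linarith [ha.2, hb.1])).mp h

theorem angle_sum_sine_ratio_lemma (α β γ δ : ℝ)
    (hα : α ∈ Set.Ioo 0 π) (hβ : β ∈ Set.Ioo 0 π)
    (hγ : γ ∈ Set.Ioo 0 π) (hδ : δ ∈ Set.Ioo 0 π)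
    (hsum : α + γ = β + δ) (hlt : α + γ < π)
    (hratio : Real.sin α / Real.sin γ = Real.sin β / Real.sin δ) :
    α = β ∧ γ = δ := by
  have hcross : sin α * sin δ = sin β * sin γ :=
    (div_eq_div_iff (sin_pos_of_mem_Ioo hγ).ne' (sin_pos_of_mem_Ioo hδ).ne').mp hratio
  have hsum_pos : 0 < sin (α + γ) := sin_pos_of_pos_of_lt_pi (by linarith [hα.1, hγ.1]) hlt
  have hprod : sin (α + γ) * sin (α - β) = 0 :=
    calc sin (α + γ) * sin (α - β)
        = sin α * sin (α + γ - β) - sin β * sin (α + γ - α) :=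
          (sin_mul_sin_sub_sub_sin_mul_sin_sub _ _ _).symm
      _ = sin α * sin δ - sin β * sin γ := by
          rw [show α + γ - β = δ by linarith, add_sub_cancel_left]
      _ = 0 := sub_eq_zero.mpr hcross
  have hαβ : α = β := eq_of_sin_sub_eq_zero hα hβ ((mul_eq_zero.mp hprod).resolve_left hsum_pos.ne')
  exact ⟨hαβ, by linarith⟩
end

section
/- In a triangle ABC, if D and E are points strictly between B and C such that rays AD and AE are isogonal with respect to angle A (i.e., ∠BAD = ∠EAC and ∠DAC = ∠BAE), then (BD/DC) · (BE/EC) = AB²/AC². -/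
open EuclideanGeometry

open scoped RealInnerProductSpace

private lemma gram_aux {V : Type*} [NormedAddCommGroup V] [InnerProductSpace ℝ V]
    (u w : V) (a b : ℝ) :
    ⟪u, u⟫ * ⟪a • u + b • w, a • u + b • w⟫ - ⟪u, a • u + b • w⟫ * ⟪u, a • u + b • w⟫
      = b ^ 2 * (⟪u, u⟫ * ⟪w, w⟫ - ⟪u, w⟫ * ⟪u, w⟫) := by
  simp only [inner_add_left, inner_add_right, real_inner_smul_left, real_inner_smul_right,
    real_inner_comm w u]
  ring

private lemma sin_lin {V : Type*} [NormedAddCommGroup V] [InnerProductSpace ℝ V]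
    (u w : V) (a b : ℝ) (hb : 0 ≤ b) :
    Real.sin (InnerProductGeometry.angle u (a • u + b • w)) * (‖u‖ * ‖a • u + b • w‖)
      = b * Real.sqrt (⟪u, u⟫ * ⟪w, w⟫ - ⟪u, w⟫ * ⟪u, w⟫) := by
  rw [InnerProductGeometry.sin_angle_mul_norm_mul_norm, gram_aux,
    Real.sqrt_mul (sq_nonneg b), Real.sqrt_sq hb]

theorem steiner_relation (A B C D E : EuclideanSpace ℝ (Fin 2))
    (hABC : AffineIndependent ℝ ![A, B, C])
    (hD : Sbtw ℝ B D C) (hE : Sbtw ℝ B E C)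
    (hiso1 : ∠ B A D = ∠ E A C) (hiso2 : ∠ D A C = ∠ B A E) :
    (dist B D / dist D C) * (dist B E / dist E C) =
      dist A B ^ 2 / dist A C ^ 2 := by
  obtain ⟨⟨t, ht, hDt⟩, hBC⟩ := sbtw_iff_mem_image_Ioo_and_ne.1 hD
  obtain ⟨⟨t', ht', hEt⟩, -⟩ := sbtw_iff_mem_image_Ioo_and_ne.1 hE
  obtain ⟨ht0, ht1⟩ := ht
  obtain ⟨ht0', ht1'⟩ := ht'
  set u : EuclideanSpace ℝ (Fin 2) := B -ᵥ A with hu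
  set w : EuclideanSpace ℝ (Fin 2) := C -ᵥ A with hw
  set s : ℝ := Real.sqrt (⟪u, u⟫ * ⟪w, w⟫ - ⟪u, w⟫ * ⟪u, w⟫) with hsdef
  have hAB : A ≠ B := by
    have := hABC.injective.ne (show (0 : Fin 3) ≠ 1 by decide)
    simpa using this
  have hAC : A ≠ C := by
    have := hABC.injective.ne (show (0 : Fin 3) ≠ 2 by decide)
    simpa using this
  have hncol : ¬Collinear ℝ ({B, A, C} : Set (EuclideanSpace ℝ (Fin 2))) := by
    rw [Set.insert_comm]
    exact affineIndependent_iff_not_collinear_set.1 hABC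
  -- s is positive
  have hsinBAC := InnerProductGeometry.sin_angle_mul_norm_mul_norm u w
  have hs : 0 < s := by
    rw [hsdef, ← hsinBAC]
    have h1 : 0 < Real.sin (InnerProductGeometry.angle u w) :=
      EuclideanGeometry.sin_pos_of_not_collinear hncol
    have h2 : 0 < ‖u‖ := by simpa [hu, vsub_eq_zero_iff_eq, sub_eq_zero] using (Ne.symm hAB)
    have h3 : 0 < ‖w‖ := by simpa [hw, vsub_eq_zero_iff_eq, sub_eq_zero] using (Ne.symm hAC)
    positivity
  -- decompositions of D -ᵥ A and E -ᵥ A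
  have hvD : D -ᵥ A = (1 - t) • u + t • w := by
    rw [← hDt, AffineMap.lineMap_apply, vadd_vsub_assoc, hu, hw]
    have : C -ᵥ B = (C -ᵥ A) - (B -ᵥ A) := (vsub_sub_vsub_cancel_right C B A).symm
    rw [this]
    module
  have hvE : E -ᵥ A = (1 - t') • u + t' • w := by
    rw [← hEt, AffineMap.lineMap_apply, vadd_vsub_assoc, hu, hw]
    have : C -ᵥ B = (C -ᵥ A) - (B -ᵥ A) := (vsub_sub_vsub_cancel_right C B A).symm
    rw [this]
    module
  have hswap : Real.sqrt (⟪w, w⟫ * ⟪u, u⟫ - ⟪w, u⟫ * ⟪w, u⟫) = s := by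
    rw [hsdef, real_inner_comm w u, mul_comm ⟪w, w⟫ ⟪u, u⟫]
  -- the four sine equations
  have E1 : Real.sin (∠ B A D) * (‖u‖ * ‖D -ᵥ A‖) = t * s := by
    show Real.sin (InnerProductGeometry.angle (B -ᵥ A) (D -ᵥ A)) * _ = _
    rw [← hu, hvD]; exact sin_lin u w (1 - t) t ht0.le
  have E2 : Real.sin (∠ D A C) * (‖w‖ * ‖D -ᵥ A‖) = (1 - t) * s := by
    show Real.sin (InnerProductGeometry.angle (D -ᵥ A) (C -ᵥ A)) * _ = _
    rw [← hw, InnerProductGeometry.angle_comm, hvD, add_comm ((1 - t) • u) (t • w), ← hswap]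
    exact sin_lin w u t (1 - t) (by linarith)
  have E3 : Real.sin (∠ B A E) * (‖u‖ * ‖E -ᵥ A‖) = t' * s := by
    show Real.sin (InnerProductGeometry.angle (B -ᵥ A) (E -ᵥ A)) * _ = _
    rw [← hu, hvE]; exact sin_lin u w (1 - t') t' ht0'.le
  have E4 : Real.sin (∠ E A C) * (‖w‖ * ‖E -ᵥ A‖) = (1 - t') * s := by
    show Real.sin (InnerProductGeometry.angle (E -ᵥ A) (C -ᵥ A)) * _ = _
    rw [← hw, InnerProductGeometry.angle_comm, hvE, add_comm ((1 - t') • u) (t' • w), ← hswap]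
    exact sin_lin w u t' (1 - t') (by linarith)
  rw [← hiso1] at E4
  rw [hiso2] at E2
  -- multiply pairs
  have P : t * t' * s ^ 2
      = Real.sin (∠ B A D) * Real.sin (∠ B A E) * (‖u‖ ^ 2 * (‖D -ᵥ A‖ * ‖E -ᵥ A‖)) := by
    calc t * t' * s ^ 2 = (t * s) * (t' * s) := by ring
      _ = (Real.sin (∠ B A D) * (‖u‖ * ‖D -ᵥ A‖)) * (Real.sin (∠ B A E) * (‖u‖ * ‖E -ᵥ A‖)) := by
          rw [E1, E3]
      _ = _ := by ring
  have Q : (1 - t) * (1 - t') * s ^ 2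
      = Real.sin (∠ B A D) * Real.sin (∠ B A E) * (‖w‖ ^ 2 * (‖D -ᵥ A‖ * ‖E -ᵥ A‖)) := by
    calc (1 - t) * (1 - t') * s ^ 2 = ((1 - t) * s) * ((1 - t') * s) := by ring
      _ = (Real.sin (∠ B A E) * (‖w‖ * ‖D -ᵥ A‖)) * (Real.sin (∠ B A D) * (‖w‖ * ‖E -ᵥ A‖)) := by
          rw [E2, E4]
      _ = _ := by ring
  have key : t * t' * ‖w‖ ^ 2 = (1 - t) * (1 - t') * ‖u‖ ^ 2 := by
    have hs2 : s ^ 2 ≠ 0 := pow_ne_zero _ hs.ne'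
    apply mul_right_cancel₀ hs2
    calc t * t' * ‖w‖ ^ 2 * s ^ 2
        = ‖w‖ ^ 2 * (t * t' * s ^ 2) := by ring
      _ = ‖u‖ ^ 2 * ((1 - t) * (1 - t') * s ^ 2) := by rw [P, Q]; ring
      _ = (1 - t) * (1 - t') * ‖u‖ ^ 2 * s ^ 2 := by ring
  -- distances
  have hL : (0 : ℝ) < dist B C := dist_pos.2 hBC
  have hdBD : dist B D = t * dist B C := by
    rw [dist_comm, ← hDt, dist_lineMap_left]
    simp [abs_of_pos ht0]
  have hdDC : dist D C = (1 - t) * dist B C := by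
    rw [← hDt, dist_lineMap_right]
    simp [Real.norm_eq_abs, abs_of_pos (by linarith : (0:ℝ) < 1 - t)]
  have hdBE : dist B E = t' * dist B C := by
    rw [dist_comm, ← hEt, dist_lineMap_left]
    simp [abs_of_pos ht0']
  have hdEC : dist E C = (1 - t') * dist B C := by
    rw [← hEt, dist_lineMap_right]
    simp [Real.norm_eq_abs, abs_of_pos (by linarith : (0:ℝ) < 1 - t')]
  have hdAB : dist A B = ‖u‖ := by rw [hu, dist_comm, dist_eq_norm_vsub (EuclideanSpace ℝ (Fin 2))]
  have hdAC : dist A C = ‖w‖ := by rw [hw, dist_comm, dist_eq_norm_vsub (EuclideanSpace ℝ (Fin 2))]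
  have hwpos : (0 : ℝ) < ‖w‖ := by simpa [hw, vsub_eq_zero_iff_eq, sub_eq_zero] using (Ne.symm hAC)
  rw [hdBD, hdDC, hdBE, hdEC, hdAB, hdAC]
  have h1t : (1 : ℝ) - t ≠ 0 := by linarith
  have h1t' : (1 : ℝ) - t' ≠ 0 := by linarith
  field_simp
  linear_combination key
end

section
/- Menelaus's theorem (one direction): if D lies on line BC outside segment BC, E lies strictly between C and A, F lies strictly between A and B, and D, E, F are collinear, then (DB/DC) · (EC/EA) · (FA/FB) = 1. -/
open EuclideanGeometry

private lemma exists_lineMap' {p q r : EuclideanSpace ℝ (Fin 2)}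
    (h : Collinear ℝ ({p, q, r} : Set (EuclideanSpace ℝ (Fin 2)))) (hpq : p ≠ q) :
    ∃ u : ℝ, r = AffineMap.lineMap p q u := by
  obtain ⟨v, hv⟩ := (collinear_iff_of_mem (Set.mem_insert p _)).1 h
  obtain ⟨c₁, hq⟩ := hv q (by simp)
  obtain ⟨c₂, hr⟩ := hv r (by simp)
  have hc₁ : c₁ ≠ 0 := by
    rintro rfl
    simp at hq
    exact hpq hq.symm
  refine ⟨c₂ / c₁, ?_⟩
  have hqp : q -ᵥ p = c₁ • v := by rw [hq]; simp
  rw [AffineMap.lineMap_apply, hqp, smul_smul, div_mul_cancel₀ _ hc₁]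
  exact hr

private lemma coeffs' {A B C : EuclideanSpace ℝ (Fin 2)}
    (hnc : ¬ Collinear ℝ ({A, B, C} : Set (EuclideanSpace ℝ (Fin 2)))) {a b : ℝ}
    (h : a • (B - A) + b • (C - A) = 0) : a = 0 ∧ b = 0 := by
  have hb : b = 0 := by
    by_contra hb
    apply hnc
    have hC : C = (-a / b) • (B - A) +ᵥ A := by
      apply smul_right_injective (EuclideanSpace ℝ (Fin 2)) hb
      have hba : b * (-a / b) = -a := by field_simp
      simp only [vadd_eq_add, smul_add, smul_smul, hba]
      linear_combination (norm := match_scalars <;> ring) h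
    refine (collinear_iff_of_mem (Set.mem_insert _ _)).2 ⟨B - A, ?_⟩
    intro p hp
    rcases hp with rfl | rfl | rfl
    · exact ⟨0, by simp⟩
    · exact ⟨1, by simp⟩
    · exact ⟨-a / b, hC⟩
  have hBA : B - A ≠ 0 := sub_ne_zero.2 (ne₁₂_of_not_collinear hnc).symm
  have ha : a = 0 := by
    rw [hb, zero_smul, add_zero, smul_eq_zero] at h
    exact h.resolve_right hBA
  exact ⟨ha, hb⟩

set_option maxHeartbeats 1000000 in
theorem menelaus (A B C D E F : EuclideanSpace ℝ (Fin 2))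
    (hABC : AffineIndependent ℝ ![A, B, C])
    (hDline : Collinear ℝ ({B, C, D} : Set (EuclideanSpace ℝ (Fin 2))))
    (hDout : ¬ Wbtw ℝ B D C)
    (hE : Sbtw ℝ C E A) (hF : Sbtw ℝ A F B)
    (hcol : Collinear ℝ ({D, E, F} : Set (EuclideanSpace ℝ (Fin 2)))) :
    (dist D B / dist D C) * (dist E C / dist E A) * (dist F A / dist F B) = 1 := by
  have hnc : ¬ Collinear ℝ ({A, B, C} : Set (EuclideanSpace ℝ (Fin 2))) :=
    affineIndependent_iff_not_collinear_set.mp hABC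
  have hAB : A ≠ B := ne₁₂_of_not_collinear hnc
  have hAC : A ≠ C := ne₁₃_of_not_collinear hnc
  have hBC : B ≠ C := ne₂₃_of_not_collinear hnc
  obtain ⟨t, ht, hEt⟩ := hE.mem_image_Ioo
  obtain ⟨s, hs, hFs⟩ := hF.mem_image_Ioo
  obtain ⟨u, hDu⟩ := exists_lineMap' hDline hBC
  -- E ≠ F
  have hEF : E ≠ F := by
    intro hef
    have h0 : s • (B - A) + (t - 1) • (C - A) = 0 := by
      rw [← hEt, ← hFs] at hef
      simp only [AffineMap.lineMap_apply, vsub_eq_sub, vadd_eq_add] at hef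
      linear_combination (norm := module) -hef
    have := (coeffs' hnc h0).1
    linarith [hs.1]
  obtain ⟨l, hDl⟩ := exists_lineMap' (show Collinear ℝ ({E, F, D} : Set (EuclideanSpace ℝ (Fin 2))) by
    apply hcol.subset; intro x hx; simp at hx ⊢; tauto) hEF
  have key : (l * s - (1 - u)) • (B - A) + ((1 - l) * (1 - t) - u) • (C - A) = 0 := by
    rw [hDu, ← hEt, ← hFs] at hDl
    simp only [AffineMap.lineMap_apply, vsub_eq_sub, vadd_eq_add] at hDl
    linear_combination (norm := module) -hDl
  obtain ⟨h1, h2⟩ := coeffs' hnc key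
  have ht0 : 0 < t := ht.1
  have ht1 : t < 1 := ht.2
  have hs0 : 0 < s := hs.1
  have hs1 : s < 1 := hs.2
  have hlk : l * (s + t - 1) = t := by linear_combination h1 + h2
  have hk2 : (1 - u) * (s + t - 1) = s * t := by
    linear_combination s * hlk - (s + t - 1) * h1
  have hk1 : u * (s + t - 1) = -((1 - s) * (1 - t)) := by
    linear_combination -hk2
  have hkne : (s + t - 1) ≠ 0 := by
    intro hk
    rw [hk, mul_zero] at hk1
    nlinarith
  have habs1 : |u| * |s + t - 1| = (1 - s) * (1 - t) := by
    rw [← abs_mul, hk1, abs_neg, abs_of_pos (by nlinarith)]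
  have habs2 : |1 - u| * |s + t - 1| = s * t := by
    rw [← abs_mul, hk2, abs_of_pos (by nlinarith)]
  have hkabs : |s + t - 1| ≠ 0 := abs_ne_zero.2 hkne
  have keyabs : |u| * t * s = |1 - u| * (1 - t) * (1 - s) := by
    have h3 : |u| * t * s * |s + t - 1| = |1 - u| * (1 - t) * (1 - s) * |s + t - 1| := by
      linear_combination (t * s) * habs1 - ((1 - t) * (1 - s)) * habs2
    exact mul_right_cancel₀ hkabs h3
  have hu0 : |u| ≠ 0 := by
    intro h0
    rw [h0, zero_mul] at habs1
    nlinarith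
  have hu1 : |1 - u| ≠ 0 := by
    intro h0
    rw [h0, zero_mul] at habs2
    nlinarith
  have dBC : dist B C ≠ 0 := dist_ne_zero.2 hBC
  have dCA : dist C A ≠ 0 := dist_ne_zero.2 hAC.symm
  have dAB : dist A B ≠ 0 := dist_ne_zero.2 hAB
  rw [hDu, ← hEt, ← hFs, dist_lineMap_left, dist_lineMap_right, dist_lineMap_left,
    dist_lineMap_right, dist_lineMap_left, dist_lineMap_right]
  simp only [Real.norm_eq_abs]
  rw [abs_of_pos ht0, abs_of_pos (by linarith : (0:ℝ) < 1 - t), abs_of_pos hs0,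
    abs_of_pos (by linarith : (0:ℝ) < 1 - s)]
  have h1t : (1 : ℝ) - t ≠ 0 := by linarith
  have h1s : (1 : ℝ) - s ≠ 0 := by linarith
  have hden : |1 - u| * dist B C * ((1 - t) * dist C A) * ((1 - s) * dist A B) ≠ 0 :=
    mul_ne_zero (mul_ne_zero (mul_ne_zero hu1 dBC) (mul_ne_zero h1t dCA)) (mul_ne_zero h1s dAB)
  rw [div_mul_div_comm, div_mul_div_comm, div_eq_one_iff_eq hden]
  linear_combination (dist B C * dist C A * dist A B) * keyabs
end

section
/- In triangle ABC with M the midpoint of BC, if E is strictly between A and B, F is strictly between A and C, and lines BF and CE meet at a point P lying on line AM, then EF is parallel to BC. -/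
open EuclideanGeometry

theorem median_cevian_parallel (A B C E F P : EuclideanSpace ℝ (Fin 2))
    (hABC : AffineIndependent ℝ ![A, B, C])
    (hE : Sbtw ℝ A E B) (hF : Sbtw ℝ A F C)
    (hPBF : P ∈ affineSpan ℝ ({B, F} : Set (EuclideanSpace ℝ (Fin 2))))
    (hPCE : P ∈ affineSpan ℝ ({C, E} : Set (EuclideanSpace ℝ (Fin 2))))
    (hPAM : P ∈ affineSpan ℝ ({A, midpoint ℝ B C} : Set (EuclideanSpace ℝ (Fin 2)))) :
    (affineSpan ℝ ({E, F} : Set (EuclideanSpace ℝ (Fin 2)))).Parallel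
      (affineSpan ℝ ({B, C} : Set (EuclideanSpace ℝ (Fin 2)))) := by
  have hnc : ¬ Collinear ℝ ({A, B, C} : Set (EuclideanSpace ℝ (Fin 2))) :=
    affineIndependent_iff_not_collinear_set.mp hABC
  have hBA : B ≠ A := by
    intro h
    exact hnc (by rw [h]; exact (collinear_pair ℝ A C).subset (by intro x hx; simp at hx ⊢; tauto))
  -- key linear independence fact
  have hind : ∀ x y : ℝ, x • (B - A) + y • (C - A) = (0 : EuclideanSpace ℝ (Fin 2)) →
      x = 0 ∧ y = 0 := by
    intro x y h
    by_cases hy : y = 0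
    · subst hy
      simp only [zero_smul, add_zero] at h
      have hBA' : B - A ≠ 0 := sub_ne_zero.mpr hBA
      rcases smul_eq_zero.mp h with hx | hv
      · exact ⟨hx, rfl⟩
      · exact absurd hv hBA'
    · exfalso
      have hc : (-(x / y)) • (B - A) = C - A := by
        apply smul_right_injective _ hy
        show y • (-(x / y) • (B - A)) = y • (C - A)
        rw [smul_smul]
        have hxy : y * (-(x / y)) = -x := by field_simp
        rw [hxy]
        linear_combination (norm := module) -h
      have hmem : C ∈ line[ℝ, A, B] := by
        have : (C -ᵥ A) +ᵥ A ∈ line[ℝ, A, B] := by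
          rw [vadd_left_mem_affineSpan_pair]
          exact ⟨-(x / y), by rw [vsub_eq_sub, vsub_eq_sub, hc]⟩
        simpa using this
      have hcol : Collinear ℝ ({C, A, B} : Set (EuclideanSpace ℝ (Fin 2))) :=
        collinear_insert_of_mem_affineSpan_pair hmem
      exact hnc (hcol.subset (by intro z hz; simp at hz ⊢; tauto))
  -- coordinates for E, F
  obtain ⟨e, he, hEe⟩ := hE.mem_image_Ioo
  obtain ⟨f, hf, hFf⟩ := hF.mem_image_Ioo
  rw [Set.mem_Ioo] at he hf
  have hEeq : E = e • (B - A) + A := by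
    rw [← hEe]; simp [AffineMap.lineMap_apply, vsub_eq_sub, vadd_eq_add]
  have hFeq : F = f • (C - A) + A := by
    rw [← hFf]; simp [AffineMap.lineMap_apply, vsub_eq_sub, vadd_eq_add]
  -- parameters on the three lines
  obtain ⟨s, hs⟩ : ∃ r : ℝ, r • (F -ᵥ B) = P -ᵥ B := by
    rw [← vadd_left_mem_affineSpan_pair]
    simpa using hPBF
  obtain ⟨t, ht⟩ : ∃ r : ℝ, r • (E -ᵥ C) = P -ᵥ C := by
    rw [← vadd_left_mem_affineSpan_pair]
    simpa using hPCE
  obtain ⟨u, hu⟩ : ∃ r : ℝ, r • (midpoint ℝ B C -ᵥ A) = P -ᵥ A := by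
    rw [← vadd_left_mem_affineSpan_pair]
    simpa using hPAM
  simp only [vsub_eq_sub] at hs ht hu
  have hM : midpoint ℝ B C - A = (1/2 : ℝ) • (B - A) + (1/2 : ℝ) • (C - A) := by
    rw [midpoint_eq_smul_add, invOf_eq_inv]
    module
  -- equation from lines BF and AM
  have eq1 : (1 - s - u/2) • (B - A) + (s * f - u/2) • (C - A)
      = (0 : EuclideanSpace ℝ (Fin 2)) := by
    have h1 : s • (F - B) + B = u • (midpoint ℝ B C - A) + A := by
      rw [hs, hu]; abel
    rw [hFeq, hM] at h1
    linear_combination (norm := module) h1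
  have eq2 : (t * e - u/2) • (B - A) + (1 - t - u/2) • (C - A)
      = (0 : EuclideanSpace ℝ (Fin 2)) := by
    have h2 : t • (E - C) + C = u • (midpoint ℝ B C - A) + A := by
      rw [ht, hu]; abel
    rw [hEeq, hM] at h2
    linear_combination (norm := module) h2
  obtain ⟨e1, e2⟩ := hind _ _ eq1
  obtain ⟨e3, e4⟩ := hind _ _ eq2
  -- deduce e = f
  have hsne : s ≠ 0 := by
    intro h0
    rw [h0] at e1 e2
    simp at e2
    rw [e2] at e1
    norm_num at e1
  have hst : s = t := by linarith
  have hef : e = f := by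
    have : s * f = s * e := by rw [hst] at e2 ⊢; linarith
    exact (mul_left_cancel₀ hsne this).symm
  -- conclude parallel
  rw [AffineSubspace.affineSpan_pair_parallel_iff_vectorSpan_eq,
    vectorSpan_pair, vectorSpan_pair]
  have hEF : E -ᵥ F = e • (B -ᵥ C) := by
    rw [vsub_eq_sub, vsub_eq_sub, hEeq, hFeq, hef]
    module
  rw [hEF]
  exact Submodule.span_singleton_smul_eq (IsUnit.mk0 e (ne_of_gt he.1)) _
end
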